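/- Let G = (N, M0, M_F) be a bounded plant with a basis partition π = (T_E, T_I) such that every implicit transition has at least one input place (for every t ∈ T_I there is p ∈ P with Pre(p,t) > 0). Then G is nonblocking if and only if its minimax-BRG is unobstructed and every dead marking in R(N, M0) is final (belongs to M_F). -/

import Mathlib

open scoped BigOperators

/-- A Petri net over places `P` and transitions `T`. -/
structure PetriNet (P T : Type) where
  Pre : P → T → ℕ
  Post : P → T → ℕ

namespace PetriNet

variable {P T : Type}

/-- Incidence matrix `C = Post − Pre` (integer valued). -/
def C (N : PetriNet P T) (p : P) (t : T) : ℤ :=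
  (N.Post p t : ℤ) - (N.Pre p t : ℤ)

/-- A transition `t` is enabled at marking `M`. -/
def Enabled (N : PetriNet P T) (M : P → ℕ) (t : T) : Prop :=
  ∀ p, N.Pre p t ≤ M p

/-- `Fires N M σ M'` means the sequence `σ` is enabled at `M` and its firing
yields `M'`, i.e. `M[σ⟩M'`. -/
inductive Fires (N : PetriNet P T) : (P → ℕ) → List T → (P → ℕ) → Prop
  | nil (M : P → ℕ) : Fires N M [] M
  | cons {M M' M'' : P → ℕ} {t : T} {σ : List T} :
      N.Enabled M t →
      (∀ p, M' p = M p + N.Post p t - N.Pre p t) →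
      Fires N M' σ M'' →
      Fires N M (t :: σ) M''

/-- The reachability set `R(N, M0)`. -/
def Reach (N : PetriNet P T) (M0 : P → ℕ) : Set (P → ℕ) :=
  {M | ∃ σ : List T, N.Fires M0 σ M}

/-- Arcs of the underlying directed graph on `P ⊕ T`, where only transitions
in `TI` are kept (the `TI`-induced subnet). -/
def Arc (N : PetriNet P T) (TI : Set T) : (P ⊕ T) → (P ⊕ T) → Prop
  | Sum.inl p, Sum.inr t => t ∈ TI ∧ 0 < N.Pre p t
  | Sum.inr t, Sum.inl p => t ∈ TI ∧ 0 < N.Post p t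
  | _, _ => False

/-- The `TI`-induced subnet is acyclic: no directed cycle in its graph. -/
def AcyclicOn (N : PetriNet P T) (TI : Set T) : Prop :=
  ∀ x, ¬ Relation.TransGen (N.Arc TI) x x

/-- `(TE, TI)` is a basis partition: `TE` and `TI` partition `T` and the
`TI`-induced subnet is acyclic. -/
def IsBasisPartition (N : PetriNet P T) (TE TI : Set T) : Prop :=
  (∀ t, t ∈ TE ↔ t ∉ TI) ∧ N.AcyclicOn TI

/-- Boundedness of the marked net `⟨N, M0⟩`. -/
def Bounded (N : PetriNet P T) (M0 : P → ℕ) : Prop :=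
  ∃ k : ℕ, ∀ M ∈ N.Reach M0, ∀ p, M p ≤ k

/-- A marking is dead if no transition is enabled at it. -/
def Dead (N : PetriNet P T) (M : P → ℕ) : Prop :=
  ∀ t : T, ¬ N.Enabled M t

/-- The set `Σ(M, t)` of explanations of `t` at `M`: implicit sequences whose
firing from `M` yields a marking enabling `t`. -/
def Expl (N : PetriNet P T) (TI : Set T) (M : P → ℕ) (t : T) : Set (List T) :=
  {σ | (∀ u ∈ σ, u ∈ TI) ∧ ∃ M', N.Fires M σ M' ∧ ∀ p, N.Pre p t ≤ M' p}

/-- The set `Σ_min(M, t)` of minimal explanations of `t` at `M`. -/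
def ExplMin [DecidableEq T] (N : PetriNet P T) (TI : Set T) (M : P → ℕ) (t : T) :
    Set (List T) :=
  {σ | σ ∈ N.Expl TI M t ∧
    ¬ ∃ σ' ∈ N.Expl TI M t,
      (∀ u, σ'.count u ≤ σ.count u) ∧ ∃ u, σ'.count u ≠ σ.count u}

/-- The set `Σ_max(M, t)` of maximal explanations of `t` at `M`. -/
def ExplMax [DecidableEq T] (N : PetriNet P T) (TI : Set T) (M : P → ℕ) (t : T) :
    Set (List T) :=
  {σ | σ ∈ N.Expl TI M t ∧
    ¬ ∃ σ' ∈ N.Expl TI M t,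
      (∀ u, σ.count u ≤ σ'.count u) ∧ ∃ u, σ'.count u ≠ σ.count u}

/-- `Y_min(M, t)`: firing vectors of minimal explanations. -/
def Ymin [DecidableEq T] (N : PetriNet P T) (TI : Set T) (M : P → ℕ) (t : T) :
    Set (T → ℕ) :=
  {y | ∃ σ ∈ N.ExplMin TI M t, ∀ u, σ.count u = y u}

/-- `Y_max(M, t)`: firing vectors of maximal explanations. -/
def Ymax [DecidableEq T] (N : PetriNet P T) (TI : Set T) (M : P → ℕ) (t : T) :
    Set (T → ℕ) :=
  {y | ∃ σ ∈ N.ExplMax TI M t, ∀ u, σ.count u = y u}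

/-- The set of basis markings `M_B` (smallest set containing `M0` and closed
under minimal-explanation steps). -/
inductive Basis [DecidableEq T] [Fintype T] (N : PetriNet P T) (TE TI : Set T)
    (M0 : P → ℕ) : (P → ℕ) → Prop
  | base : Basis N TE TI M0 M0
  | step {M M' : P → ℕ} {t : T} {y : T → ℕ} :
      Basis N TE TI M0 M →
      t ∈ TE →
      y ∈ N.Ymin TI M t →
      (∀ p, (M' p : ℤ) = (M p : ℤ) + (∑ u, N.C p u * y u) + N.C p t) →
      Basis N TE TI M0 M'

/-- The set of minimax basis markings `M_BM` (smallest set containing `M0` and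
closed under minimal- or maximal-explanation steps). -/
inductive Minimax [DecidableEq T] [Fintype T] (N : PetriNet P T) (TE TI : Set T)
    (M0 : P → ℕ) : (P → ℕ) → Prop
  | base : Minimax N TE TI M0 M0
  | step {M M' : P → ℕ} {t : T} {y : T → ℕ} :
      Minimax N TE TI M0 M →
      t ∈ TE →
      (y ∈ N.Ymin TI M t ∨ y ∈ N.Ymax TI M t) →
      (∀ p, (M' p : ℤ) = (M p : ℤ) + (∑ u, N.C p u * y u) + N.C p t) →
      Minimax N TE TI M0 M'

/-- The implicit reach `R_I(M_b)`: markings reachable from `M_b` by firing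
only implicit transitions. -/
def ReachI (N : PetriNet P T) (TI : Set T) (Mb : P → ℕ) : Set (P → ℕ) :=
  {M | ∃ σ : List T, (∀ u ∈ σ, u ∈ TI) ∧ N.Fires Mb σ M}

/-- One step of the minimax-BRG: `M1 ⇒ M2`. -/
def BrgStep [DecidableEq T] [Fintype T] (N : PetriNet P T) (TE TI : Set T)
    (M1 M2 : P → ℕ) : Prop :=
  ∃ t ∈ TE, ∃ y : T → ℕ, (y ∈ N.Ymin TI M1 t ∨ y ∈ N.Ymax TI M1 t) ∧
    ∀ p, (M2 p : ℤ) = (M1 p : ℤ) + (∑ u, N.C p u * y u) + N.C p t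

/-- One step of the BRG using only minimal explanations. -/
def MinBrgStep [DecidableEq T] [Fintype T] (N : PetriNet P T) (TE TI : Set T)
    (M1 M2 : P → ℕ) : Prop :=
  ∃ t ∈ TE, ∃ y ∈ N.Ymin TI M1 t,
    ∀ p, (M2 p : ℤ) = (M1 p : ℤ) + (∑ u, N.C p u * y u) + N.C p t

/-- The minimax-BRG is unobstructed: every minimax basis marking can reach, by
BRG-steps, an i-coreachable minimax basis marking. -/
def Unobstructed [DecidableEq T] [Fintype T] (N : PetriNet P T) (TE TI : Set T)
    (M0 : P → ℕ) (MF : Set (P → ℕ)) : Prop :=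
  ∀ Mb, N.Minimax TE TI M0 Mb →
    ∃ Mb', Relation.ReflTransGen (N.BrgStep TE TI) Mb Mb' ∧
      N.Minimax TE TI M0 Mb' ∧ (N.ReachI TI Mb' ∩ MF).Nonempty

/-- `Σ_I,max(M)`: maximal implicit firing sequences at `M`. -/
def ImplMax [DecidableEq T] (N : PetriNet P T) (TI : Set T) (M : P → ℕ) :
    Set (List T) :=
  {σ | (∀ u ∈ σ, u ∈ TI) ∧ (∃ M', N.Fires M σ M') ∧
    ¬ ∃ σ' : List T, (∀ u ∈ σ', u ∈ TI) ∧ (∃ M', N.Fires M σ' M') ∧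
      (∀ u, σ.count u ≤ σ'.count u) ∧ ∃ u, σ'.count u ≠ σ.count u}

/-- `Y_I,max(M)`: firing vectors of maximal implicit firing sequences. -/
def YImax [DecidableEq T] (N : PetriNet P T) (TI : Set T) (M : P → ℕ) :
    Set (T → ℕ) :=
  {y | ∃ σ ∈ N.ImplMax TI M, ∀ u, σ.count u = y u}

end PetriNet

/-! In an acyclic implicit subnet the state equation is exact: every nonnegative implicit
vector `x` with `M + C x ≥ 0` is the firing vector of a sequence enabled at `M` (fire a
transition of `x` that no other transition of `x` feeds). Hence if an explicit `t` fires after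
an implicit sequence `τ` from a basis marking, a minimal explanation `σ ≤ τ` gives a BRG-step
whose target implicitly reaches the new marking through `τ - σ`; so the BRG covers every
reachable marking up to implicit firings, and nonblocking implies unobstructed.

Conversely, since every implicit transition has an input place, acyclicity bounds how often
each implicit transition can fire, so implicit runs are finite. From any reachable marking one
thus implicitly reaches a marking that is dead (hence final) or enables an explicit `t`; a
maximal explanation extending the implicit path leads to a basis marking that is implicitly
reachable after `t`, from which unobstructedness reaches a final marking. -/

theorem List.length_lt_of_count_le_of_exists_ne {α : Type*} [DecidableEq α] {l₁ l₂ : List α}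
    (hle : ∀ a, l₁.count a ≤ l₂.count a) (hne : ∃ a, l₁.count a ≠ l₂.count a) :
    l₁.length < l₂.length := by
  have hsub : l₁.Subperm l₂ := List.subperm_ext_iff.2 fun a _ => hle a
  refine hsub.length_le.lt_of_ne fun hlen => ?_
  obtain ⟨a, ha⟩ := hne
  exact ha ((hsub.perm_of_length_le hlen.ge).count_eq a)

theorem List.length_eq_sum_count {α : Type*} [Fintype α] [DecidableEq α] (l : List α) :
    l.length = ∑ a, l.count a := by
  simpa using (Multiset.sum_count_eq_card (s := Finset.univ) (m := (l : Multiset α)) (by simp)).symm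

namespace PetriNet

open Relation

variable {P T : Type} {N : PetriNet P T} {TE TI : Set T} {M M' M'' Mb : P → ℕ} {t : T}
  {σ τ : List T}

def fire (N : PetriNet P T) (M : P → ℕ) (t : T) : P → ℕ :=
  fun p => M p + N.Post p t - N.Pre p t

theorem cast_fire (h : N.Enabled M t) (p : P) : (N.fire M t p : ℤ) = M p + N.C p t := by
  have := h p
  simp only [fire, C]
  omega

theorem Fires.single (h : N.Enabled M t) : N.Fires M [t] (N.fire M t) :=
  .cons h (fun _ => rfl) (.nil _)

theorem Fires.append (h : N.Fires M σ M') (h' : N.Fires M' τ M'') : N.Fires M (σ ++ τ) M'' := by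
  induction h with
  | nil => exact h'
  | cons he hm _ ih => exact .cons he hm (ih h')

theorem Fires.eq_of_dead (hd : N.Dead M) (h : N.Fires M σ M') : M' = M := by
  cases h with
  | nil => rfl
  | cons he _ _ => exact absurd he (hd _)

theorem mem_reach_self (M : P → ℕ) : M ∈ N.Reach M := ⟨[], .nil M⟩

theorem reach_trans (h : M' ∈ N.Reach M) (h' : M'' ∈ N.Reach M') : M'' ∈ N.Reach M := by
  obtain ⟨σ, hσ⟩ := h
  obtain ⟨τ, hτ⟩ := h'
  exact ⟨σ ++ τ, hσ.append hτ⟩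

theorem fire_mem_reach (h : N.Enabled M t) : N.fire M t ∈ N.Reach M := ⟨[t], .single h⟩

theorem mem_reachI_self (M : P → ℕ) : M ∈ N.ReachI TI M := ⟨[], by simp, .nil M⟩

theorem reachI_trans (h : M' ∈ N.ReachI TI M) (h' : M'' ∈ N.ReachI TI M') :
    M'' ∈ N.ReachI TI M := by
  obtain ⟨σ, hσI, hσ⟩ := h
  obtain ⟨τ, hτI, hτ⟩ := h'
  refine ⟨σ ++ τ, fun u hu => ?_, hσ.append hτ⟩
  rcases List.mem_append.1 hu with hu | hu
  exacts [hσI u hu, hτI u hu]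

theorem reachI_subset_reach : N.ReachI TI M ⊆ N.Reach M := fun _ ⟨σ, _, hσ⟩ => ⟨σ, hσ⟩

theorem fire_mem_reachI (ht : t ∈ TI) (h : N.Enabled M t) : N.fire M t ∈ N.ReachI TI M :=
  ⟨[t], by simpa using ht, .single h⟩

def Feeds (N : PetriNet P T) (TI : Set T) (u v : T) : Prop :=
  u ∈ TI ∧ v ∈ TI ∧ ∃ p, 0 < N.Post p u ∧ 0 < N.Pre p v

theorem transGen_arc_of_transGen_feeds {u v : T} (h : TransGen (N.Feeds TI) u v) :
    TransGen (N.Arc TI) (.inr u) (.inr v) := by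
  have arc : ∀ {u v}, N.Feeds TI u v → TransGen (N.Arc TI) (.inr u) (.inr v) :=
    fun ⟨hu, hv, p, hpost, hpre⟩ =>
      .head (show N.Arc TI (.inr _) (.inl p) from ⟨hu, hpost⟩)
        (.single (show N.Arc TI (.inl p) (.inr _) from ⟨hv, hpre⟩))
  induction h with
  | single h => exact arc h
  | tail _ h ih => exact ih.trans (arc h)

theorem wellFounded_feeds [Finite T] (hac : N.AcyclicOn TI) : WellFounded (N.Feeds TI) := by
  have : Std.Irrefl (TransGen (N.Feeds TI)) :=
    ⟨fun x hx => hac _ (transGen_arc_of_transGen_feeds hx)⟩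
  exact Subrelation.wf TransGen.single (Finite.wellFounded_of_trans_of_irrefl _)

section Finite

variable [Fintype T] [DecidableEq T]

theorem Fires.balance (h : N.Fires M σ M') (p : P) :
    M' p + ∑ u, N.Pre p u * σ.count u = M p + ∑ u, N.Post p u * σ.count u := by
  induction h with
  | nil => simp
  | @cons M M₁ M₂ t σ he hm _ ih =>
    have hcount : ∀ f : T → ℕ, ∑ u, f u * (t :: σ).count u = ∑ u, f u * σ.count u + f t := by
      intro f
      simp [List.count_cons, mul_add, Finset.sum_add_distrib]
    have := he p
    rw [hcount, hcount, ← add_assoc, ih, hm p]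
    omega

theorem Fires.state_equation (h : N.Fires M σ M') (p : P) :
    (M' p : ℤ) = M p + ∑ u, N.C p u * σ.count u := by
  have := congrArg (Nat.cast : ℕ → ℤ) (h.balance p)
  push_cast at this
  simp only [C, sub_mul, Finset.sum_sub_distrib]
  linarith

omit [DecidableEq T] in
theorem enabled_of_state_equation {x : T → ℕ}
    (h : ∀ p, (M' p : ℤ) = M p + ∑ u, N.C p u * x u) (ht : 0 < x t)
    (hfree : ∀ p u, 0 < N.Pre p t → 0 < x u → N.Post p u = 0) : N.Enabled M t := by
  intro p
  rcases (N.Pre p t).eq_zero_or_pos with hp | hp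
  · simp [hp]
  have hpost : ∀ u, (N.Post p u : ℤ) * x u = 0 := by
    intro u
    rcases (x u).eq_zero_or_pos with hu | hu
    · simp [hu]
    · simp [hfree p u hp hu]
  have hsum : (N.Pre p t : ℤ) * x t ≤ ∑ u, (N.Pre p u : ℤ) * x u :=
    Finset.single_le_sum (f := fun u => (N.Pre p u : ℤ) * x u) (fun _ _ => by positivity)
      (Finset.mem_univ t)
  have hxt : (N.Pre p t : ℤ) ≤ N.Pre p t * x t :=
    le_mul_of_one_le_right (by positivity) (by exact_mod_cast ht)
  have heq := h p
  simp only [C, sub_mul, Finset.sum_sub_distrib, hpost, Finset.sum_const_zero] at heq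
  have : (0 : ℤ) ≤ M' p := by positivity
  exact_mod_cast (by linarith : (N.Pre p t : ℤ) ≤ M p)

theorem mem_reachI_of_state_equation (hac : N.AcyclicOn TI) {x : T → ℕ}
    (hx : ∀ u, 0 < x u → u ∈ TI) (h : ∀ p, (M' p : ℤ) = M p + ∑ u, N.C p u * x u) :
    M' ∈ N.ReachI TI M := by
  induction hn : ∑ u, x u generalizing x M with
  | zero =>
    have hx0 : ∀ u, x u = 0 := fun u => Finset.sum_eq_zero_iff.1 hn u (Finset.mem_univ u)
    obtain rfl : M' = M := funext fun p => by simpa [hx0] using h p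
    exact mem_reachI_self _
  | succ n ih =>
    obtain ⟨u, -, hu⟩ := Finset.exists_ne_zero_of_sum_ne_zero (by omega : ∑ u, x u ≠ 0)
    obtain ⟨t, ht, hmin⟩ :=
      (wellFounded_feeds hac).has_min {u | 0 < x u} ⟨u, Nat.pos_of_ne_zero hu⟩
    have ht : 0 < x t := ht
    have hen : N.Enabled M t := enabled_of_state_equation h ht fun p u hp hu => by
      by_contra hpost
      exact hmin u hu ⟨hx u hu, hx t ht, p, Nat.pos_of_ne_zero hpost, hp⟩
    obtain ⟨x', rfl⟩ : ∃ x', x = x' + Pi.single t 1 :=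
      ⟨x - Pi.single t 1, funext fun u => by
        by_cases hu : u = t
        · subst hu; simp; omega
        · simp [hu]⟩
    have hx' : ∀ u, 0 < x' u → u ∈ TI := fun u hu => hx u (by simp only [Pi.add_apply]; omega)
    have h' : ∀ p, (M' p : ℤ) = N.fire M t p + ∑ u, N.C p u * x' u := fun p => by
      rw [h p, cast_fire hen]
      simp [mul_add, Finset.sum_add_distrib, Pi.single_apply]
      ring
    have hn' : ∑ u, x' u = n := by simpa [Finset.sum_add_distrib] using hn
    exact reachI_trans (fire_mem_reachI (hx t ht) hen) (ih hx' h' hn')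

theorem mem_reachI_of_count_le (hac : N.AcyclicOn TI) {ρ ρ' : List T}
    (hle : ∀ u, ρ.count u ≤ ρ'.count u) (hρ' : ∀ u ∈ ρ', u ∈ TI) {A B : P → ℕ}
    (h : ∀ p, (A p : ℤ) - ∑ u, N.C p u * ρ.count u = B p - ∑ u, N.C p u * ρ'.count u) :
    B ∈ N.ReachI TI A := by
  refine mem_reachI_of_state_equation hac (x := fun u => ρ'.count u - ρ.count u)
    (fun u hu => hρ' u (List.count_pos_iff.1 (by omega))) fun p => ?_
  have := h p
  simp only [Nat.cast_sub (hle _), mul_sub, Finset.sum_sub_distrib]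
  linarith


theorem exists_count_le_of_fires (hac : N.AcyclicOn TI) (hinput : ∀ t ∈ TI, ∃ p, 0 < N.Pre p t)
    (M : P → ℕ) (t : T) :
    ∃ b, ∀ σ M', (∀ u ∈ σ, u ∈ TI) → N.Fires M σ M' → σ.count t ≤ b := by
  induction t using (wellFounded_feeds hac).induction with
  | _ t ih =>
  by_cases ht : t ∈ TI
  swap
  · exact ⟨0, fun σ _ hσ _ => (List.count_eq_zero_of_not_mem fun h => ht (hσ t h)).le⟩
  obtain ⟨p, hp⟩ := hinput t ht
  -- only transitions feeding `t` through `p` can refill `p`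
  have hfeed : ∀ u, ∃ b, ∀ σ M', (∀ u ∈ σ, u ∈ TI) → N.Fires M σ M' →
      0 < N.Post p u → σ.count u ≤ b := by
    intro u
    by_cases hu : u ∈ TI
    · by_cases hpu : 0 < N.Post p u
      · obtain ⟨b, hb⟩ := ih u ⟨hu, ht, p, hpu, hp⟩
        exact ⟨b, fun σ M' hσ hf _ => hb σ M' hσ hf⟩
      · exact ⟨0, fun _ _ _ _ h => absurd h hpu⟩
    · exact ⟨0, fun σ _ hσ _ _ => (List.count_eq_zero_of_not_mem fun h => hu (hσ u h)).le⟩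
  choose b hb using hfeed
  refine ⟨M p + ∑ u, N.Post p u * b u, fun σ M' hσ hf => ?_⟩
  calc σ.count t ≤ N.Pre p t * σ.count t := Nat.le_mul_of_pos_left _ hp
    _ ≤ ∑ u, N.Pre p u * σ.count u :=
      Finset.single_le_sum (f := fun u => N.Pre p u * σ.count u) (fun _ _ => Nat.zero_le _)
        (Finset.mem_univ t)
    _ ≤ M p + ∑ u, N.Post p u * σ.count u := by have := hf.balance p; omega
    _ ≤ M p + ∑ u, N.Post p u * b u := by
      refine Nat.add_le_add_left (Finset.sum_le_sum fun u _ => ?_) _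
      rcases (N.Post p u).eq_zero_or_pos with hpu | hpu
      · simp [hpu]
      · exact Nat.mul_le_mul_left _ (hb u σ M' hσ hf hpu)

theorem finite_setOf_implicit_fires (hac : N.AcyclicOn TI)
    (hinput : ∀ t ∈ TI, ∃ p, 0 < N.Pre p t) (M : P → ℕ) :
    {σ : List T | (∀ u ∈ σ, u ∈ TI) ∧ ∃ M', N.Fires M σ M'}.Finite := by
  choose b hb using exists_count_le_of_fires hac hinput M
  refine (List.finite_length_le T (∑ t, b t)).subset ?_
  rintro σ ⟨hσ, M', hf⟩
  show σ.length ≤ _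
  rw [List.length_eq_sum_count]
  exact Finset.sum_le_sum fun t _ => hb t σ M' hσ hf

theorem exists_mem_reachI_forall_not_enabled (hac : N.AcyclicOn TI)
    (hinput : ∀ t ∈ TI, ∃ p, 0 < N.Pre p t) (M : P → ℕ) :
    ∃ M' ∈ N.ReachI TI M, ∀ t ∈ TI, ¬ N.Enabled M' t := by
  obtain ⟨σ, ⟨hσ, M', hf⟩, hmax⟩ := Set.exists_max_image _ List.length
    (finite_setOf_implicit_fires hac hinput M) ⟨[], by simp, M, .nil M⟩
  refine ⟨M', ⟨σ, hσ, hf⟩, fun t ht hen => ?_⟩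
  have hext : σ ++ [t] ∈ {σ : List T | (∀ u ∈ σ, u ∈ TI) ∧ ∃ M', N.Fires M σ M'} :=
    ⟨by simpa [or_imp, forall_and] using ⟨hσ, ht⟩, _, hf.append (.single hen)⟩
  simpa using hmax _ hext

omit [Fintype T] in
theorem exists_mem_explMin_count_le (hσ : σ ∈ N.Expl TI M t) :
    ∃ σm ∈ N.ExplMin TI M t, ∀ u, σm.count u ≤ σ.count u := by
  obtain ⟨σm, ⟨hσm, hle⟩, hmin⟩ := (measure List.length).wf.has_min
    {σ' | σ' ∈ N.Expl TI M t ∧ ∀ u, σ'.count u ≤ σ.count u} ⟨σ, hσ, fun _ => le_rfl⟩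
  refine ⟨σm, ⟨hσm, ?_⟩, hle⟩
  rintro ⟨σ', hσ', hle', hne⟩
  exact hmin σ' ⟨hσ', fun u => (hle' u).trans (hle u)⟩
    (List.length_lt_of_count_le_of_exists_ne hle' hne)

theorem exists_mem_explMax_count_ge (hac : N.AcyclicOn TI)
    (hinput : ∀ t ∈ TI, ∃ p, 0 < N.Pre p t) (hσ : σ ∈ N.Expl TI M t) :
    ∃ σx ∈ N.ExplMax TI M t, ∀ u, σ.count u ≤ σx.count u := by
  have hfin : {σ' | σ' ∈ N.Expl TI M t ∧ ∀ u, σ.count u ≤ σ'.count u}.Finite :=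
    (finite_setOf_implicit_fires hac hinput M).subset fun _ ⟨⟨hI, M', hf, _⟩, _⟩ => ⟨hI, M', hf⟩
  obtain ⟨σx, ⟨hσx, hle⟩, hmax⟩ :=
    Set.exists_max_image _ List.length hfin ⟨σ, hσ, fun _ => le_rfl⟩
  refine ⟨σx, ⟨hσx, ?_⟩, hle⟩
  rintro ⟨σ', hσ', hle', u, hne⟩
  exact (hmax σ' ⟨hσ', fun v => (hle v).trans (hle' v)⟩).not_gt
    (List.length_lt_of_count_le_of_exists_ne hle' ⟨u, Ne.symm hne⟩)

theorem exists_brgStep_of_mem_explMin_or_explMax (ht : t ∈ TE)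
    (hσ : σ ∈ N.ExplMin TI M t ∨ σ ∈ N.ExplMax TI M t) :
    ∃ M', N.BrgStep TE TI M M' ∧ ∀ p, (M' p : ℤ) - ∑ u, N.C p u * σ.count u = M p + N.C p t := by
  obtain ⟨-, Mσ, hf, hen⟩ : σ ∈ N.Expl TI M t := hσ.elim (·.1) (·.1)
  refine ⟨N.fire Mσ t, ⟨t, ht, _, hσ.imp (⟨σ, ·, fun _ => rfl⟩) (⟨σ, ·, fun _ => rfl⟩),
    fun p => by rw [cast_fire hen, hf.state_equation]⟩, fun p => ?_⟩
  rw [cast_fire hen, hf.state_equation]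
  ring

theorem exists_brgStep_fire_mem_reachI (hac : N.AcyclicOn TI) (hM : M ∈ N.ReachI TI Mb)
    (ht : t ∈ TE) (hen : N.Enabled M t) :
    ∃ Mb', N.BrgStep TE TI Mb Mb' ∧ N.fire M t ∈ N.ReachI TI Mb' := by
  obtain ⟨τ, hτ, hf⟩ := hM
  obtain ⟨σ, hσ, hle⟩ := exists_mem_explMin_count_le (⟨hτ, M, hf, hen⟩ : τ ∈ N.Expl TI Mb t)
  obtain ⟨Mb', hstep, hMb'⟩ := exists_brgStep_of_mem_explMin_or_explMax ht (.inl hσ)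
  refine ⟨Mb', hstep, mem_reachI_of_count_le hac hle hτ fun p => ?_⟩
  rw [hMb', cast_fire hen, hf.state_equation]
  ring

theorem exists_brgStep_mem_reachI_fire (hac : N.AcyclicOn TI)
    (hinput : ∀ t ∈ TI, ∃ p, 0 < N.Pre p t) (hM : M ∈ N.ReachI TI Mb)
    (ht : t ∈ TE) (hen : N.Enabled M t) :
    ∃ Mb', N.BrgStep TE TI Mb Mb' ∧ Mb' ∈ N.ReachI TI (N.fire M t) := by
  obtain ⟨τ, hτ, hf⟩ := hM
  obtain ⟨σ, hσ, hle⟩ :=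
    exists_mem_explMax_count_ge hac hinput (⟨hτ, M, hf, hen⟩ : τ ∈ N.Expl TI Mb t)
  obtain ⟨Mb', hstep, hMb'⟩ := exists_brgStep_of_mem_explMin_or_explMax ht (.inr hσ)
  refine ⟨Mb', hstep, mem_reachI_of_count_le hac hle hσ.1.1 fun p => ?_⟩
  rw [hMb', cast_fire hen, hf.state_equation]
  ring

theorem BrgStep.mem_reach (h : N.BrgStep TE TI M M') : M' ∈ N.Reach M := by
  obtain ⟨t, -, y, hy, heq⟩ := h
  obtain ⟨σ, ⟨-, Mσ, hf, hen⟩, hσy⟩ : ∃ σ ∈ N.Expl TI M t, ∀ u, σ.count u = y u := by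
    rcases hy with ⟨σ, hσ, hσy⟩ | ⟨σ, hσ, hσy⟩
    exacts [⟨σ, hσ.1, hσy⟩, ⟨σ, hσ.1, hσy⟩]
  obtain rfl : M' = N.fire Mσ t := funext fun p => by
    have := heq p
    simp only [← hσy] at this
    exact_mod_cast (show (M' p : ℤ) = N.fire Mσ t p by
      rw [this, cast_fire hen, hf.state_equation])
  exact reach_trans ⟨σ, hf⟩ (fire_mem_reach hen)

theorem minimax_iff_reflTransGen {M0 : P → ℕ} :
    N.Minimax TE TI M0 M ↔ ReflTransGen (N.BrgStep TE TI) M0 M := by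
  constructor
  · intro h
    induction h with
    | base => rfl
    | step _ ht hy heq ih => exact ih.tail ⟨_, ht, _, hy, heq⟩
  · intro h
    induction h with
    | refl => exact .base
    | tail _ hstep ih =>
      obtain ⟨t, ht, y, hy, heq⟩ := hstep
      exact .step ih ht hy heq

theorem mem_reach_of_reflTransGen_brgStep (h : ReflTransGen (N.BrgStep TE TI) M M') :
    M' ∈ N.Reach M := by
  induction h with
  | refl => exact mem_reach_self M
  | tail _ hstep ih => exact reach_trans ih hstep.mem_reach

theorem exists_reflTransGen_brgStep_mem_reachI (hbp : N.IsBasisPartition TE TI)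
    (hM : M ∈ N.ReachI TI Mb) (hM' : M' ∈ N.Reach M) :
    ∃ Mb', ReflTransGen (N.BrgStep TE TI) Mb Mb' ∧ M' ∈ N.ReachI TI Mb' := by
  obtain ⟨σ, hσ⟩ := hM'
  induction hσ generalizing Mb with
  | nil => exact ⟨Mb, .refl, hM⟩
  | @cons M M₁ _ t _ hen hm _ ih =>
    obtain rfl : M₁ = N.fire M t := funext hm
    by_cases ht : t ∈ TI
    · exact ih (reachI_trans hM (fire_mem_reachI ht hen))
    · obtain ⟨Mb', hstep, hMb'⟩ := exists_brgStep_fire_mem_reachI hbp.2 hM ((hbp.1 t).2 ht) hen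
      obtain ⟨Mb'', hpath, hM'⟩ := ih hMb'
      exact ⟨Mb'', .head hstep hpath, hM'⟩

end Finite

end PetriNet

open PetriNet in
theorem statement12_general {P T : Type} [Fintype T] [DecidableEq T]
    (N : PetriNet P T) (M0 : P → ℕ) (TE TI : Set T)
    (hbp : N.IsBasisPartition TE TI)
    (hinput : ∀ t ∈ TI, ∃ p : P, 0 < N.Pre p t)
    (MF : Set (P → ℕ)) :
    (∀ M ∈ N.Reach M0, (N.Reach M ∩ MF).Nonempty) ↔
      (N.Unobstructed TE TI M0 MF ∧
        ∀ M ∈ N.Reach M0, N.Dead M → M ∈ MF) := by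
  constructor
  · intro hnb
    refine ⟨fun Mb hMb => ?_, fun M hM hdead => ?_⟩
    · rw [minimax_iff_reflTransGen] at hMb
      obtain ⟨Mf, hMf, hMfF⟩ := hnb Mb (mem_reach_of_reflTransGen_brgStep hMb)
      obtain ⟨Mb', hpath, hMf'⟩ :=
        exists_reflTransGen_brgStep_mem_reachI hbp (mem_reachI_self Mb) hMf
      exact ⟨Mb', hpath, minimax_iff_reflTransGen.2 (hMb.trans hpath), Mf, hMf', hMfF⟩
    · obtain ⟨Mf, ⟨σ, hσ⟩, hMfF⟩ := hnb M hM
      rwa [← hσ.eq_of_dead hdead]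
  · rintro ⟨hunob, hdead⟩ M hM
    obtain ⟨Mb, hpath, hMb⟩ := exists_reflTransGen_brgStep_mem_reachI hbp (mem_reachI_self M0) hM
    obtain ⟨Mt, hMt, hidle⟩ := exists_mem_reachI_forall_not_enabled hbp.2 hinput M
    by_cases hd : N.Dead Mt
    · exact ⟨Mt, reachI_subset_reach hMt, hdead Mt (reach_trans hM (reachI_subset_reach hMt)) hd⟩
    obtain ⟨t, hen⟩ : ∃ t, N.Enabled Mt t := by simpa [Dead] using hd
    have htE : t ∈ TE := (hbp.1 t).2 fun htI => hidle t htI hen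
    obtain ⟨Mb₂, hstep, hMb₂⟩ :=
      exists_brgStep_mem_reachI_fire hbp.2 hinput (reachI_trans hMb hMt) htE hen
    obtain ⟨Mb₃, hpath₃, -, Mf, hMf, hMfF⟩ :=
      hunob Mb₂ (minimax_iff_reflTransGen.2 (hpath.tail hstep))
    have hreach : Mb₂ ∈ N.Reach M := reach_trans (reachI_subset_reach hMt)
      (reach_trans (fire_mem_reach hen) (reachI_subset_reach hMb₂))
    exact ⟨Mf, reach_trans hreach (reach_trans (mem_reach_of_reflTransGen_brgStep hpath₃)
      (reachI_subset_reach hMf)), hMfF⟩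

open PetriNet in
/-- **Theorem 2.** A bounded plant is nonblocking iff its
minimax-BRG is unobstructed and all its dead markings are final. -/
theorem statement12 {P T : Type} [Fintype T] [DecidableEq T]
    (N : PetriNet P T) (M0 : P → ℕ) (TE TI : Set T)
    (hbp : N.IsBasisPartition TE TI) (hbnd : N.Bounded M0)
    (hinput : ∀ t ∈ TI, ∃ p : P, 0 < N.Pre p t)
    (MF : Set (P → ℕ)) (hMF : MF ⊆ N.Reach M0) :
    (∀ M ∈ N.Reach M0, (N.Reach M ∩ MF).Nonempty) ↔
      (N.Unobstructed TE TI M0 MF ∧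
        ∀ M ∈ N.Reach M0, N.Dead M → M ∈ MF) :=
  statement12_general N M0 TE TI hbp hinput MF
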